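/- Let H ∈ (0,1) and let ε > 0. Then the integral ∫₀^{π/4} φ(θ)^{ε − 1/(2H)} dθ is finite, where φ(θ) = φ(cos θ, sin θ). -/
import Mathlib


open MeasureTheory Real

noncomputable section

/-- `φ(t,v) = t^{2H} v^{2H} − ¼(t^{2H} + v^{2H} − |t−v|^{2H})²`. -/
def phiFun (H t v : ℝ) : ℝ :=
  t ^ (2 * H) * v ^ (2 * H) - (t ^ (2 * H) + v ^ (2 * H) - |t - v| ^ (2 * H)) ^ 2 / 4

lemma key1 {H x : ℝ} (hH0 : 0 < H) (hH1 : H < 1) (hx : 0 < x) (hx2 : x ≤ 1/2) :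
    1 - (1-x) ^ H ≤ 2 ^ (H-1) * x ^ H := by
  have h1 : (1-x) ≤ (1-x) ^ H := by
    calc (1-x) = (1-x) ^ (1:ℝ) := (Real.rpow_one _).symm
    _ ≤ (1-x) ^ H := Real.rpow_le_rpow_of_exponent_ge (by linarith) (by linarith) hH1.le
  have h2 : x = x ^ H * x ^ (1-H) := by
    rw [← Real.rpow_add hx]; ring_nf; rw [Real.rpow_one]
  have h3 : x ^ (1-H) ≤ (2:ℝ) ^ (H-1) := by
    have h5 : x ^ (1-H) ≤ (1/2 : ℝ) ^ (1-H) :=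
      Real.rpow_le_rpow hx.le hx2 (by linarith)
    have h4 : ((1:ℝ)/2) ^ (1-H) = (2:ℝ) ^ (H-1) := by
      rw [Real.div_rpow zero_le_one (by norm_num), Real.one_rpow,
        show H-1 = -(1-H) by ring, Real.rpow_neg (by norm_num), one_div]
    linarith
  have hxH : 0 ≤ x ^ H := Real.rpow_nonneg hx.le H
  nlinarith [h3, hxH, mul_le_mul_of_nonneg_left h3 hxH]

-- unscaled version
lemma key2 {H v t : ℝ} (hH0 : 0 < H) (hH1 : H < 1) (hv : 0 < v) (hvt : 2*v ≤ t) :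
    t ^ H - (t-v) ^ H ≤ 2 ^ (H-1) * v ^ H := by
  have ht : 0 < t := by linarith
  have hx : 0 < v/t := div_pos hv ht
  have hx2 : v/t ≤ 1/2 := by rw [div_le_div_iff₀ ht two_pos] at *; linarith [hvt]
  have h := key1 hH0 hH1 hx hx2
  have e1 : (t - v) ^ H = t ^ H * (1 - v/t) ^ H := by
    rw [← Real.mul_rpow ht.le (by rw [sub_nonneg]; exact (div_le_one ht).2 (by linarith))]
    congr 1; field_simp
  have e2 : v ^ H = t ^ H * (v/t) ^ H := by
    rw [← Real.mul_rpow ht.le hx.le]; congr 1; field_simp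
  have htH : 0 ≤ t ^ H := Real.rpow_nonneg ht.le H
  rw [e1, e2]
  calc t ^ H - t ^ H * (1 - v/t) ^ H = t ^ H * (1 - (1 - v/t) ^ H) := by ring
  _ ≤ t ^ H * (2 ^ (H-1) * (v/t) ^ H) := mul_le_mul_of_nonneg_left h htH
  _ = 2 ^ (H-1) * (t ^ H * (v/t) ^ H) := by ring


set_option maxHeartbeats 2000000 in
lemma phi_lower {H v t : ℝ} (hH0 : 0 < H) (hH1 : H < 1) (hv : 0 < v) (hvt : v < t)
    (ht1 : t ≤ 1) (ht2 : 1/2 ≤ t) :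
    (1 - 2 ^ (H-1))/16 * ((v ^ H)^2 * ((t-v) ^ H)^2) ≤ phiFun H t v := by
  have ht0 : 0 < t := by linarith
  have htv0 : 0 < t - v := by linarith
  set A := t ^ H with hA
  set B := v ^ H with hB
  set C := (t-v) ^ H with hC
  set D := (2:ℝ) ^ (H-1) with hD
  have hphi : phiFun H t v = A^2 * B^2 - (A^2 + B^2 - C^2)^2/4 := by
    have sq : ∀ x : ℝ, 0 < x → x ^ (2*H) = (x ^ H)^2 := by
      intro x hx
      rw [two_mul, Real.rpow_add hx, _root_.sq]
    unfold phiFun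
    rw [abs_of_pos htv0, sq t ht0, sq v hv, sq (t-v) htv0]
  have hA0 : 0 < A := Real.rpow_pos_of_pos ht0 H
  have hA1 : A ≤ 1 := Real.rpow_le_one ht0.le ht1 hH0.le
  have hA2 : 1/2 ≤ A := by
    calc (1/2 : ℝ) ≤ t := ht2
    _ = t ^ (1:ℝ) := (Real.rpow_one t).symm
    _ ≤ A := Real.rpow_le_rpow_of_exponent_ge ht0 ht1 hH1.le
  have hB0 : 0 < B := Real.rpow_pos_of_pos hv H
  have hB1 : B ≤ 1 := Real.rpow_le_one hv.le (by linarith) hH0.le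
  have hC0 : 0 < C := Real.rpow_pos_of_pos htv0 H
  have hC1 : C ≤ 1 := Real.rpow_le_one htv0.le (by linarith) hH0.le
  have hCA : C ≤ A := Real.rpow_le_rpow htv0.le (by linarith) hH0.le
  have hBA : B ≤ A := Real.rpow_le_rpow hv.le hvt.le hH0.le
  have hD0 : 0 < D := Real.rpow_pos_of_pos two_pos _
  have hD1 : D < 1 := Real.rpow_lt_one_of_one_lt_of_neg one_lt_two (by linarith)
  have hBCcase : ∀ h2 : 2*v ≤ t, B ≤ C := fun h2 =>
    Real.rpow_le_rpow hv.le (by linarith) hH0.le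
  have hCBcase : ∀ h2 : t ≤ 2*v, C ≤ B := fun h2 =>
    Real.rpow_le_rpow htv0.le (by linarith) hH0.le
  have k1 : ∀ h2 : 2*v ≤ t, A - C ≤ D * B := fun h2 => key2 hH0 hH1 hv h2
  have k2 : ∀ h2 : t ≤ 2*v, A - B ≤ D * C := fun h2 => by
    have k := key2 hH0 hH1 htv0 (by linarith : 2*(t-v) ≤ t)
    rw [show t - (t-v) = v by ring] at k
    rw [← hA, ← hB, ← hC, ← hD] at k
    linarith
  clear_value A B C D
  rw [hphi]
  have hprod : (1-D)/4 * (B^2 * C^2) ≤ (C + B - A) * (C + A - B) * (A + B - C) * (A + B + C) := by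
    rcases le_or_gt (2*v) t with h2 | h2
    · have hBC : B ≤ C := hBCcase h2
      have k := k1 h2
      have hDB : (1-D) * B = B - D * B := by ring
      have f1 : (1-D) * B ≤ C + B - A := by linarith
      have f2 : (1/2 : ℝ) ≤ C + A - B := by linarith
      have f3 : B ≤ A + B - C := by linarith
      have f4 : (1/2 : ℝ) ≤ A + B + C := by linarith
      have hf1p : (0:ℝ) ≤ (1-D) * B := mul_nonneg (by linarith) hB0.le
      have h12 : ((1-D)*B)*(1/2) ≤ (C + B - A) * (C + A - B) :=
        mul_le_mul f1 f2 (by norm_num) (by linarith)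
      have h34 : B*(1/2) ≤ (A + B - C) * (A + B + C) :=
        mul_le_mul f3 f4 (by norm_num) (by linarith)
      have hCsq : C^2 ≤ 1 := by nlinarith
      calc (1-D)/4 * (B^2 * C^2) ≤ (1-D)/4 * (B^2 * 1) :=
            mul_le_mul_of_nonneg_left
              (mul_le_mul_of_nonneg_left hCsq (sq_nonneg B)) (by linarith)
      _ = (((1-D)*B)*(1/2)) * (B*(1/2)) := by ring
      _ ≤ ((C + B - A) * (C + A - B)) * ((A + B - C) * (A + B + C)) := by
            apply mul_le_mul h12 h34 (mul_nonneg hB0.le (by norm_num))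
            linarith [mul_nonneg hf1p (by norm_num : (0:ℝ) ≤ (1/2:ℝ))]
      _ = (C + B - A) * (C + A - B) * (A + B - C) * (A + B + C) := by ring
    · have hCB : C ≤ B := hCBcase h2.le
      have k := k2 h2.le
      have hDC : (1-D) * C = C - D * C := by ring
      have f1 : (1-D) * C ≤ C + B - A := by linarith
      have f2 : C ≤ C + A - B := by linarith
      have f3 : B ≤ A + B - C := by linarith
      have f4 : (1/2 : ℝ) ≤ A + B + C := by linarith
      have hf1p : (0:ℝ) ≤ (1-D) * C := mul_nonneg (by linarith) hC0.le
      have h12 : ((1-D)*C)*C ≤ (C + B - A) * (C + A - B) :=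
        mul_le_mul f1 f2 hC0.le (by linarith)
      have h34 : B*(1/2) ≤ (A + B - C) * (A + B + C) :=
        mul_le_mul f3 f4 (by norm_num) (by linarith)
      calc (1-D)/4 * (B^2 * C^2) ≤ (1-D)/2 * (C^2 * B) := by
            have e1 : (1-D)/4 * (B^2 * C^2) = ((1-D)/4 * C^2 * B) * B := by ring
            have e2 : (1-D)/2 * (C^2 * B) = ((1-D)/4 * C^2 * B) * 2 := by ring
            rw [e1, e2]
            exact mul_le_mul_of_nonneg_left (by linarith)
              (mul_nonneg (mul_nonneg (by linarith) (sq_nonneg C)) hB0.le)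
      _ = (((1-D)*C)*C) * (B*(1/2)) := by ring
      _ ≤ ((C + B - A) * (C + A - B)) * ((A + B - C) * (A + B + C)) := by
            apply mul_le_mul h12 h34 (mul_nonneg hB0.le (by norm_num))
            exact le_trans (mul_nonneg hf1p hC0.le) h12
      _ = (C + B - A) * (C + A - B) * (A + B - C) * (A + B + C) := by ring
  nlinarith [hprod]

set_option maxHeartbeats 1000000 in
/-- For `H ∈ (0,1)` and `ε > 0`, the integral `∫₀^{π/4} φ(θ)^{ε − 1/(2H)} dθ` is finite,
where `φ(θ) = φ(cos θ, sin θ)`. -/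
theorem integral_phi_theta_rpow_lt_top (H : ℝ) (hH : H ∈ Set.Ioo (0 : ℝ) 1)
    (ε : ℝ) (hε : 0 < ε) :
    (∫⁻ θ in Set.Ioo (0 : ℝ) (Real.pi / 4),
        ENNReal.ofReal ((phiFun H (Real.cos θ) (Real.sin θ)) ^ (ε - 1 / (2 * H)))) < ⊤ := by
  obtain ⟨hH0, hH1⟩ := hH
  have hpi := Real.pi_pos
  -- pointwise facts on the interval
  have facts : ∀ θ ∈ Set.Ioo (0:ℝ) (π/4),
      0 < Real.sin θ ∧ Real.sin θ < Real.cos θ ∧ Real.cos θ ≤ 1 ∧ 1/2 ≤ Real.cos θ ∧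
      Real.cos θ - Real.sin θ = Real.sqrt 2 * Real.sin (π/4 - θ) := by
    rintro θ ⟨hθ0, hθ1⟩
    have hsin : 0 < Real.sin θ := Real.sin_pos_of_pos_of_lt_pi hθ0 (by linarith)
    have h2 : Real.sqrt 2 * Real.sqrt 2 = 2 := Real.mul_self_sqrt (by norm_num)
    have hid : Real.cos θ - Real.sin θ = Real.sqrt 2 * Real.sin (π/4 - θ) := by
      rw [Real.sin_sub, Real.sin_pi_div_four, Real.cos_pi_div_four]
      ring_nf
      rw [Real.sq_sqrt (by norm_num : (0:ℝ) ≤ 2)]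
      ring
    have hsin2 : 0 < Real.sin (π/4 - θ) :=
      Real.sin_pos_of_pos_of_lt_pi (by linarith) (by linarith)
    have hsq2 : 0 < Real.sqrt 2 := Real.sqrt_pos.2 (by norm_num)
    have hcs : Real.sin θ < Real.cos θ := by nlinarith [mul_pos hsq2 hsin2]
    have hcospos : 0 < Real.cos θ := lt_trans hsin hcs
    have hcos2 : 1/2 ≤ Real.cos θ := by
      nlinarith [Real.sin_sq_add_cos_sq θ]
    exact ⟨hsin, hcs, Real.cos_le_one θ, hcos2, hid⟩
  by_cases hp : 0 ≤ ε - 1 / (2 * H)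
  · -- easy case: integrand bounded by 1
    have hb : ∀ θ ∈ Set.Ioo (0:ℝ) (π/4),
        ENNReal.ofReal ((phiFun H (Real.cos θ) (Real.sin θ)) ^ (ε - 1 / (2 * H))) ≤ 1 := by
      intro θ hθ
      obtain ⟨hsin, hcs, hcos1, hcos2, hid⟩ := facts θ hθ
      have hlow := phi_lower hH0 hH1 hsin hcs hcos1 hcos2
      have hD1 : (2:ℝ) ^ (H-1) < 1 :=
        Real.rpow_lt_one_of_one_lt_of_neg one_lt_two (by linarith)
      have hφ0 : 0 ≤ phiFun H (Real.cos θ) (Real.sin θ) := by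
        refine le_trans ?_ hlow
        have h1 : (0:ℝ) < (1 - 2 ^ (H-1))/16 := by linarith
        positivity
      have hφ1 : phiFun H (Real.cos θ) (Real.sin θ) ≤ 1 := by
        unfold phiFun
        have e1 : Real.cos θ ^ (2*H) ≤ 1 :=
          Real.rpow_le_one (by linarith) hcos1 (by linarith)
        have e2 : Real.sin θ ^ (2*H) ≤ 1 :=
          Real.rpow_le_one hsin.le (by linarith) (by linarith)
        have e3 : 0 ≤ Real.sin θ ^ (2*H) := Real.rpow_nonneg hsin.le _
        have e4 : 0 ≤ Real.cos θ ^ (2*H) := Real.rpow_nonneg (by linarith) _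
        nlinarith [sq_nonneg (Real.cos θ ^ (2*H) + Real.sin θ ^ (2*H) - |Real.cos θ - Real.sin θ| ^ (2*H))]
      rw [← ENNReal.ofReal_one]
      exact ENNReal.ofReal_le_ofReal (Real.rpow_le_one hφ0 hφ1 hp)
    calc (∫⁻ θ in Set.Ioo (0:ℝ) (π/4),
          ENNReal.ofReal ((phiFun H (Real.cos θ) (Real.sin θ)) ^ (ε - 1 / (2 * H))))
        ≤ ∫⁻ _ in Set.Ioo (0:ℝ) (π/4), 1 := setLIntegral_mono measurable_const hb
      _ = volume (Set.Ioo (0:ℝ) (π/4)) := setLIntegral_one _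
      _ < ⊤ := by rw [Real.volume_Ioo]; exact ENNReal.ofReal_lt_top
  · -- main case: exponent negative
    push_neg at hp
    set p : ℝ := ε - 1 / (2 * H) with hpdef
    set a : ℝ := 2*H*ε - 1 with hadef
    have hpa : 2*H*p = a := by rw [hpdef, hadef]; field_simp
    have ha0 : a < 0 := by nlinarith
    have ha1 : -1 < a := by nlinarith
    set c2 : ℝ := (1 - 2 ^ (H-1))/16 with hc2def
    have hD1 : (2:ℝ) ^ (H-1) < 1 :=
      Real.rpow_lt_one_of_one_lt_of_neg one_lt_two (by linarith)
    have hc2 : 0 < c2 := by rw [hc2def]; linarith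
    set K : ℝ := c2 ^ p * ((2/π) ^ a * (2*Real.sqrt 2/π) ^ a) with hKdef
    have hsq2 : 0 < Real.sqrt 2 := Real.sqrt_pos.2 (by norm_num)
    have hK : 0 < K := by
      rw [hKdef]
      have := Real.rpow_pos_of_pos hc2 p
      have := Real.rpow_pos_of_pos (show (0:ℝ) < 2/π by positivity) a
      have := Real.rpow_pos_of_pos (show (0:ℝ) < 2*Real.sqrt 2/π by positivity) a
      positivity
    set M : ℝ := K * (π/8) ^ a with hMdef
    have hM : 0 < M := by
      rw [hMdef]
      have := Real.rpow_pos_of_pos (show (0:ℝ) < π/8 by positivity) a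
      positivity
    clear_value p c2 K M
    have hbound : ∀ θ ∈ Set.Ioo (0:ℝ) (π/4),
        ENNReal.ofReal ((phiFun H (Real.cos θ) (Real.sin θ)) ^ p) ≤
        ENNReal.ofReal (M * (θ ^ a + (π/4 - θ) ^ a)) := by
      rintro θ hθ
      obtain ⟨hθ0, hθ1⟩ := hθ
      obtain ⟨hsin, hcs, hcos1, hcos2, hid⟩ := facts θ ⟨hθ0, hθ1⟩
      apply ENNReal.ofReal_le_ofReal
      set t := Real.cos θ
      set v := Real.sin θ
      have htv0 : 0 < t - v := by linarith
      have hlow := phi_lower hH0 hH1 hsin hcs hcos1 hcos2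
      rw [← hc2def] at hlow
      have hBpos : 0 < (v ^ H)^2 * ((t - v) ^ H)^2 := by
        have := Real.rpow_pos_of_pos hsin H
        have := Real.rpow_pos_of_pos htv0 H
        positivity
      have hlowpos : 0 < c2 * ((v ^ H)^2 * ((t - v) ^ H)^2) := mul_pos hc2 hBpos
      have h2 : (phiFun H t v) ^ p ≤ (c2 * ((v ^ H)^2 * ((t - v) ^ H)^2)) ^ p :=
        Real.rpow_le_rpow_of_nonpos hlowpos hlow hp.le
      -- rewrite the rhs
      have sqeq : ∀ x : ℝ, 0 < x → ((x ^ H)^2) ^ p = x ^ a := by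
        intro x hx
        have e1 : (x ^ H)^2 = x ^ (2*H) := by
          rw [two_mul, Real.rpow_add hx, _root_.sq]
        rw [e1, ← Real.rpow_mul hx.le, hpa]
      have h3 : (c2 * ((v ^ H)^2 * ((t - v) ^ H)^2)) ^ p
          = c2 ^ p * (v ^ a * (t - v) ^ a) := by
        rw [Real.mul_rpow hc2.le hBpos.le,
          Real.mul_rpow (sq_nonneg _) (sq_nonneg _), sqeq v hsin, sqeq (t-v) htv0]
      have h4 : v ^ a ≤ (2/π) ^ a * θ ^ a := by
        have hlo : 2/π * θ ≤ v := Real.mul_le_sin hθ0.le (by linarith)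
        have hlopos : 0 < 2/π * θ := by positivity
        calc v ^ a ≤ (2/π * θ) ^ a := Real.rpow_le_rpow_of_nonpos hlopos hlo ha0.le
        _ = (2/π) ^ a * θ ^ a := Real.mul_rpow (by positivity) hθ0.le
      have h5 : (t - v) ^ a ≤ (2*Real.sqrt 2/π) ^ a * (π/4 - θ) ^ a := by
        have hlo : 2*Real.sqrt 2/π * (π/4 - θ) ≤ t - v := by
          have := Real.mul_le_sin (x := π/4 - θ) (by linarith) (by linarith)
          have h6 : Real.sqrt 2 * (2/π * (π/4 - θ)) ≤ Real.sqrt 2 * Real.sin (π/4 - θ) :=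
            mul_le_mul_of_nonneg_left this hsq2.le
          rw [hid]; calc 2*Real.sqrt 2/π * (π/4 - θ) = Real.sqrt 2 * (2/π * (π/4 - θ)) := by ring
          _ ≤ Real.sqrt 2 * Real.sin (π/4 - θ) := h6
        have hlopos : 0 < 2*Real.sqrt 2/π * (π/4 - θ) := by
          have : 0 < π/4 - θ := by linarith
          positivity
        calc (t - v) ^ a ≤ (2*Real.sqrt 2/π * (π/4 - θ)) ^ a :=
              Real.rpow_le_rpow_of_nonpos hlopos hlo ha0.le
        _ = (2*Real.sqrt 2/π) ^ a * (π/4 - θ) ^ a :=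
              Real.mul_rpow (by positivity) (by linarith)
      have hθa : 0 < θ ^ a := Real.rpow_pos_of_pos hθ0 a
      have hθa' : 0 < (π/4 - θ) ^ a := Real.rpow_pos_of_pos (by linarith) a
      have hc2p : 0 < c2 ^ p := Real.rpow_pos_of_pos hc2 p
      have h7 : v ^ a * (t - v) ^ a ≤
          ((2/π) ^ a * θ ^ a) * ((2*Real.sqrt 2/π) ^ a * (π/4 - θ) ^ a) := by
        apply mul_le_mul h4 h5 (Real.rpow_nonneg htv0.le a)
        positivity
      have h8 : θ ^ a * (π/4 - θ) ^ a ≤ (π/8) ^ a * (θ ^ a + (π/4 - θ) ^ a) := by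
        have hp8 : (0:ℝ) < π/8 := by positivity
        have hp8a : 0 < (π/8 : ℝ) ^ a := Real.rpow_pos_of_pos hp8 a
        rcases le_total θ (π/8) with h | h
        · have : (π/4 - θ) ^ a ≤ (π/8) ^ a :=
            Real.rpow_le_rpow_of_nonpos hp8 (by linarith) ha0.le
          calc θ ^ a * (π/4 - θ) ^ a ≤ θ ^ a * (π/8) ^ a :=
                mul_le_mul_of_nonneg_left this hθa.le
          _ ≤ (π/8) ^ a * (θ ^ a + (π/4 - θ) ^ a) := by nlinarith
        · have : θ ^ a ≤ (π/8) ^ a :=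
            Real.rpow_le_rpow_of_nonpos hp8 h ha0.le
          calc θ ^ a * (π/4 - θ) ^ a ≤ (π/8) ^ a * (π/4 - θ) ^ a :=
                mul_le_mul_of_nonneg_right this hθa'.le
          _ ≤ (π/8) ^ a * (θ ^ a + (π/4 - θ) ^ a) := by nlinarith
      calc (phiFun H t v) ^ p ≤ (c2 * ((v ^ H)^2 * ((t - v) ^ H)^2)) ^ p := h2
      _ = c2 ^ p * (v ^ a * (t - v) ^ a) := h3
      _ ≤ c2 ^ p * (((2/π) ^ a * θ ^ a) * ((2*Real.sqrt 2/π) ^ a * (π/4 - θ) ^ a)) :=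
            mul_le_mul_of_nonneg_left h7 hc2p.le
      _ = K * (θ ^ a * (π/4 - θ) ^ a) := by rw [hKdef]; ring
      _ ≤ K * ((π/8) ^ a * (θ ^ a + (π/4 - θ) ^ a)) :=
            mul_le_mul_of_nonneg_left h8 hK.le
      _ = M * (θ ^ a + (π/4 - θ) ^ a) := by rw [hMdef]; ring
    -- integrability of the bounding function
    have hInt : IntegrableOn (fun θ : ℝ => M * (θ ^ a + (π/4 - θ) ^ a))
        (Set.Ioo (0:ℝ) (π/4)) volume := by
      have I1 : IntervalIntegrable (fun x : ℝ => x ^ a) volume 0 (π/4) :=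
        intervalIntegral.intervalIntegrable_rpow' ha1
      have I2 : IntervalIntegrable (fun x : ℝ => (π/4 - x) ^ a) volume 0 (π/4) := by
        have := (intervalIntegral.intervalIntegrable_rpow' (a := 0) (b := π/4) ha1).comp_sub_left (π/4)
        simpa using this.symm
      have I := (I1.add I2).const_mul M
      rw [intervalIntegrable_iff'] at I
      exact I.mono_set (Set.Ioo_subset_Icc_self.trans (by
        rw [Set.uIcc_of_le (by positivity : (0:ℝ) ≤ π/4)]))
    have hmeas : Measurable fun θ : ℝ => ENNReal.ofReal (M * (θ ^ a + (π/4 - θ) ^ a)) := by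
      fun_prop
    calc (∫⁻ θ in Set.Ioo (0:ℝ) (π/4),
          ENNReal.ofReal ((phiFun H (Real.cos θ) (Real.sin θ)) ^ p))
        ≤ ∫⁻ θ in Set.Ioo (0:ℝ) (π/4),
          ENNReal.ofReal (M * (θ ^ a + (π/4 - θ) ^ a)) := setLIntegral_mono hmeas hbound
      _ < ⊤ := hInt.lintegral_lt_top
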